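/- Let R ⊆ V be a set of n terminal vertices in a finite connected weighted graph, and assume every terminal is a leaf of the minimum Steiner tree for R. Then the cost of the minimum spanning tree of the complete graph on R with shortest-path distances is at most (2 - 2/n) times the cost of a minimum Steiner tree for R. -/

import Mathlib

/-- Cost of a walk: the sum of the weights of its edges. -/
noncomputable def walkCost {V : Type*} {G : SimpleGraph V} (w : Sym2 V → ℝ)
    {u v : V} (p : G.Walk u v) : ℝ :=
  (p.edges.map w).sum

/-- Shortest-path distance between two vertices with respect to edge weights. -/
noncomputable def spDist {V : Type*} (G : SimpleGraph V) (w : Sym2 V → ℝ)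
    (u v : V) : ℝ :=
  sInf {c | ∃ p : G.Walk u v, c = walkCost w p}

/-- Shortest-path distance as a function of an unordered pair. -/
noncomputable def spDistSym {V : Type*} (G : SimpleGraph V) (w : Sym2 V → ℝ)
    (e : Sym2 V) : ℝ :=
  sInf {c | ∃ u v, e = s(u, v) ∧ c = spDist G w u v}

/-- Cost of a minimum Steiner tree for the terminal set `R`: the infimum of the
total edge weight over connected subgraphs containing `R`. -/
noncomputable def steinerCost {V : Type*} (G : SimpleGraph V) (w : Sym2 V → ℝ)
    (R : Set V) : ℝ :=
  sInf {c | ∃ T : G.Subgraph, R ⊆ T.verts ∧ T.Connected ∧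
    c = ∑ᶠ e ∈ T.edgeSet, w e}

/-- Cost of a minimum spanning tree of the metric closure on `R`: the infimum
over trees on the vertex set `R` of the total shortest-path distance of their
edges. -/
noncomputable def mstClosureCost {V : Type*} (G : SimpleGraph V)
    (w : Sym2 V → ℝ) (R : Finset V) : ℝ :=
  sInf {c | ∃ T : SimpleGraph {x // x ∈ R}, T.IsTree ∧
    c = ∑ᶠ e ∈ T.edgeSet, spDistSym G w (e.map Subtype.val)}


namespace KouAux

open SimpleGraph List

section walkcost
variable {V : Type*} {G : SimpleGraph V} {w : Sym2 V → ℝ}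
lemma walkCost_nil {u : V} : walkCost w (Walk.nil : G.Walk u u) = 0 := by
  simp [walkCost]

lemma walkCost_cons {u v x : V} (h : G.Adj u v) (p : G.Walk v x) :
    walkCost w (Walk.cons h p) = w s(u, v) + walkCost w p := by
  simp [walkCost]

lemma walkCost_append {u v x : V} (p : G.Walk u v) (q : G.Walk v x) :
    walkCost w (p.append q) = walkCost w p + walkCost w q := by
  simp [walkCost, Walk.edges_append]

lemma walkCost_nonneg (hw : ∀ e, 0 ≤ w e) {u v : V} (p : G.Walk u v) :
    0 ≤ walkCost w p :=
  List.sum_nonneg (by rintro x hx; obtain ⟨e, -, rfl⟩ := List.mem_map.1 hx; exact hw e)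

lemma spDist_nonneg (hw : ∀ e, 0 ≤ w e) (u v : V) : 0 ≤ spDist G w u v := by
  apply Real.sInf_nonneg
  rintro x ⟨p, rfl⟩
  exact walkCost_nonneg hw p

lemma bddBelow_spSet (hw : ∀ e, 0 ≤ w e) (u v : V) :
    BddBelow {c | ∃ p : G.Walk u v, c = walkCost w p} := by
  refine ⟨0, ?_⟩
  rintro x ⟨p, rfl⟩
  exact walkCost_nonneg hw p

lemma spDist_le_walkCost (hw : ∀ e, 0 ≤ w e) {u v : V} (p : G.Walk u v) :
    spDist G w u v ≤ walkCost w p :=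
  csInf_le (bddBelow_spSet hw u v) ⟨p, rfl⟩

lemma spDist_self (hw : ∀ e, 0 ≤ w e) (u : V) : spDist G w u u = 0 :=
  le_antisymm (by simpa [walkCost_nil] using spDist_le_walkCost hw (Walk.nil : G.Walk u u))
    (spDist_nonneg hw u u)

lemma spDist_triangle (hw : ∀ e, 0 ≤ w e) (hG : G.Preconnected) (x y z : V) :
    spDist G w x z ≤ spDist G w x y + spDist G w y z := by
  have hne : ∀ a b : V, {c | ∃ p : G.Walk a b, c = walkCost w p}.Nonempty := by
    intro a b
    obtain ⟨p⟩ := hG a b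
    exact ⟨walkCost w p, p, rfl⟩
  have key : ∀ (p : G.Walk x y) (q : G.Walk y z),
      spDist G w x z ≤ walkCost w p + walkCost w q := by
    intro p q
    have := spDist_le_walkCost hw (p.append q)
    rwa [walkCost_append] at this
  have h1 : spDist G w x z - spDist G w y z ≤ spDist G w x y := by
    apply le_csInf (hne x y)
    rintro b ⟨p, rfl⟩
    have h2 : spDist G w x z - walkCost w p ≤ spDist G w y z := by
      apply le_csInf (hne y z)
      rintro b ⟨q, rfl⟩
      have := key p q
      linarith
    linarith
  linarith

lemma spDist_le_weight (hw : ∀ e, 0 ≤ w e) {u v : V} (h : G.Adj u v) :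
    spDist G w u v ≤ w s(u, v) := by
  have := spDist_le_walkCost hw (Walk.cons h Walk.nil)
  simpa [walkCost_cons, walkCost_nil] using this

lemma spDistSym_nonneg (hw : ∀ e, 0 ≤ w e) (e : Sym2 V) : 0 ≤ spDistSym G w e := by
  apply Real.sInf_nonneg
  rintro x ⟨u, v, -, rfl⟩
  exact spDist_nonneg hw u v

lemma spDistSym_le (hw : ∀ e, 0 ≤ w e) (u v : V) :
    spDistSym G w s(u, v) ≤ spDist G w u v := by
  apply csInf_le
  · refine ⟨0, ?_⟩
    rintro x ⟨a, b, -, rfl⟩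
    exact spDist_nonneg hw a b
  · exact ⟨u, v, rfl, rfl⟩


end walkcost

section lists
variable {α : Type*}

/-- Sum of `d` over consecutive pairs of a list. -/
def chainSum (d : α → α → ℝ) : List α → ℝ
  | [] => 0
  | [_] => 0
  | a :: b :: t => d a b + chainSum d (b :: t)

@[simp] lemma chainSum_nil (d : α → α → ℝ) : chainSum d [] = 0 := rfl
@[simp] lemma chainSum_singleton (d : α → α → ℝ) (a : α) : chainSum d [a] = 0 := rfl
lemma chainSum_cons_cons (d : α → α → ℝ) (a b : α) (t : List α) :
    chainSum d (a :: b :: t) = d a b + chainSum d (b :: t) := rfl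

lemma chainSum_cons (d : α → α → ℝ) (a : α) {l : List α} (hl : l ≠ []) :
    chainSum d (a :: l) = d a (l.head hl) + chainSum d l := by
  cases l with
  | nil => exact absurd rfl hl
  | cons b t => rfl

lemma chainSum_nonneg {d : α → α → ℝ} (hd : ∀ a b, 0 ≤ d a b) (l : List α) :
    0 ≤ chainSum d l := by
  induction l with
  | nil => simp
  | cons a t ih =>
    cases t with
    | nil => simp
    | cons b t' =>
      rw [chainSum_cons_cons]
      have := hd a b
      linarith

lemma chainSum_append (d : α → α → ℝ) {l₁ l₂ : List α} (h₁ : l₁ ≠ []) (h₂ : l₂ ≠ []) :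
    chainSum d (l₁ ++ l₂) =
      chainSum d l₁ + d (l₁.getLast h₁) (l₂.head h₂) + chainSum d l₂ := by
  induction l₁ with
  | nil => exact absurd rfl h₁
  | cons a t ih =>
    cases t with
    | nil =>
      simp only [List.nil_append, List.cons_append, List.getLast_singleton]
      rw [chainSum_cons d a h₂]
      simp [chainSum]
    | cons b t' =>
      have ih' := ih (by simp)
      rw [List.cons_append] at ih'
      rw [List.cons_append, List.cons_append, chainSum_cons_cons, ih',
        chainSum_cons_cons, List.getLast_cons_cons]
      ring

/-- Anchored chain sum: `d x a₁ + d a₁ a₂ + ⋯ + d aₖ y`. -/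
def anchor (d : α → α → ℝ) : α → List α → α → ℝ
  | x, [], y => d x y
  | x, a :: t, y => d x a + anchor d a t y

lemma anchor_eq_chainSum (d : α → α → ℝ) (x y : α) (l : List α) :
    anchor d x l y = chainSum d (x :: (l ++ [y])) := by
  induction l generalizing x with
  | nil => simp [anchor, chainSum]
  | cons a t ih =>
    simp only [anchor, List.cons_append]
    rw [ih a, chainSum_cons_cons]

lemma anchor_le_cons {d : α → α → ℝ} (htri : ∀ a b c, d a c ≤ d a b + d b c)
    (x a y : α) (l : List α) : anchor d x l y ≤ d x a + anchor d a l y := by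
  cases l with
  | nil => exact htri x a y
  | cons c t =>
    simp only [anchor]
    have := htri x a c
    linarith

lemma anchor_mono {d : α → α → ℝ} (htri : ∀ a b c, d a c ≤ d a b + d b c)
    {l₁ l₂ : List α} (h : l₁ <+ l₂) (x y : α) :
    anchor d x l₁ y ≤ anchor d x l₂ y := by
  induction h generalizing x with
  | slnil => exact le_rfl
  | @cons l₁ l₂ a h ih =>
    calc anchor d x l₁ y ≤ anchor d x l₂ y := ih x
      _ ≤ d x a + anchor d a l₂ y := anchor_le_cons htri x a y l₂
      _ = anchor d x (a :: l₂) y := rfl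
  | @cons_cons l₁ l₂ a h ih =>
    simp only [anchor]
    exact (add_le_add_iff_left _).2 (ih a)

lemma chainSum_eq_sum_getD (d : α → α → ℝ) (x0 : α) (l : List α) :
    chainSum d l = ∑ k ∈ Finset.range (l.length - 1), d (l.getD k x0) (l.getD (k + 1) x0) := by
  induction l with
  | nil => simp
  | cons a t ih =>
    cases t with
    | nil => simp
    | cons b t' =>
      have hlen : (a :: b :: t').length - 1 = (b :: t').length - 1 + 1 := by
        simp
      rw [chainSum_cons_cons, ih, hlen, Finset.sum_range_succ']
      simp only [List.getD_cons_succ, List.getD_cons_zero]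
      ring

-- new material

lemma head_eq_getD (x0 : α) {l : List α} (hl : l ≠ []) : l.head hl = l.getD 0 x0 := by
  cases l with
  | nil => exact absurd rfl hl
  | cons a t => rfl

lemma head_drop_eq_getD (x0 : α) {l : List α} {k : ℕ} (hk : k < l.length)
    (h' : l.drop k ≠ []) : (l.drop k).head h' = l.getD k x0 := by
  induction l generalizing k with
  | nil => simp at hk
  | cons a t ih =>
    cases k with
    | zero => rfl
    | succ j =>
      simp only [List.drop_succ_cons, List.getD_cons_succ] at *
      exact ih (by simpa using hk) h'

lemma head_take_eq_head {l : List α} {k : ℕ} (hk : 1 ≤ k) (h' : l.take k ≠ [])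
    (hl : l ≠ []) : (l.take k).head h' = l.head hl := by
  cases l with
  | nil => exact absurd rfl hl
  | cons a t =>
    cases k with
    | zero => omega
    | succ j => rfl

lemma getLast?_take_eq_getD (x0 : α) {l : List α} {k : ℕ} (h1 : 1 ≤ k) (h2 : k ≤ l.length) :
    (l.take k).getLast? = some (l.getD (k - 1) x0) := by
  induction l generalizing k with
  | nil => simp at h2; omega
  | cons a t ih =>
    cases k with
    | zero => omega
    | succ j =>
      cases j with
      | zero => simp
      | succ i =>
        have ht : i + 1 ≤ t.length := by rw [List.length_cons] at h2; omega
        have htake : (a :: t).take (i + 2) = a :: t.take (i + 1) := rfl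
        have hne : t.take (i + 1) ≠ [] := by
          have hlt : (t.take (i + 1)).length = i + 1 := by
            rw [List.length_take]; omega
          intro h
          rw [h] at hlt
          simp at hlt
        rw [htake, show a :: t.take (i + 1) = [a] ++ t.take (i + 1) from rfl,
          List.getLast?_append_of_ne_nil _ hne, ih (by omega) ht]
        simp

/-- The cost of the `k`-th cycle edge of the cycle `r0 :: c` (where `c` ends with `r0`). -/
def dropTerm (d : α → α → ℝ) (r0 : α) (c : List α) (k : ℕ) : ℝ :=
  if k = 0 then d r0 (c.getD 0 r0) else d (c.getD (k - 1) r0) (c.getD k r0)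

lemma exists_rotation (d : α → α → ℝ) (r0 : α) (c : List α) (hc : c ≠ [])
    (hlast : c.getLast hc = r0) {k : ℕ} (hk : k < c.length) :
    ∃ P : List α, P.Perm c ∧ chainSum d P = chainSum d (r0 :: c) - dropTerm d r0 c k := by
  cases k with
  | zero =>
    refine ⟨c, Perm.refl c, ?_⟩
    rw [chainSum_cons d r0 hc, dropTerm, if_pos rfl, head_eq_getD r0 hc]
    ring
  | succ j =>
    set t1 := c.take (j + 1) with ht1def
    set t2 := c.drop (j + 1) with ht2def
    have hlen1 : t1.length = j + 1 := by
      rw [ht1def, List.length_take]; omega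
    have hlen2 : t2.length = c.length - (j + 1) := by
      rw [ht2def, List.length_drop]
    have ht1 : t1 ≠ [] := by
      intro h; rw [h] at hlen1; simp at hlen1
    have ht2 : t2 ≠ [] := by
      intro h; rw [h] at hlen2; simp at hlen2; omega
    have hsplit : t1 ++ t2 = c := List.take_append_drop _ c
    refine ⟨t2 ++ t1, by rw [← hsplit]; exact List.perm_append_comm, ?_⟩
    have hlastq : c.getLast? = some r0 := by
      rw [List.getLast?_eq_getLast hc, hlast]
    have hlast2 : t2.getLast ht2 = r0 := by
      have : t2.getLast? = some r0 := by
        rw [← hlastq, ← hsplit, List.getLast?_append_of_ne_nil _ ht2]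
      rwa [List.getLast?_eq_getLast ht2, Option.some_inj] at this
    have hhead1 : t1.head ht1 = c.getD 0 r0 :=
      (head_take_eq_head (by omega) ht1 hc).trans (head_eq_getD r0 hc)
    have hhead2 : t2.head ht2 = c.getD (j + 1) r0 := head_drop_eq_getD r0 hk ht2
    have hlast1 : t1.getLast ht1 = c.getD j r0 := by
      have := getLast?_take_eq_getD r0 (l := c) (k := j + 1) (by omega) (by omega)
      rw [← ht1def, List.getLast?_eq_getLast ht1, Option.some_inj] at this
      simpa using this
    have lhs : chainSum d (t2 ++ t1) =
        chainSum d t2 + d r0 (c.getD 0 r0) + chainSum d t1 := by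
      rw [chainSum_append d ht2 ht1, hlast2, hhead1]
    have rhs : chainSum d (r0 :: c) =
        d r0 (c.getD 0 r0) + chainSum d t1 + d (c.getD j r0) (c.getD (j + 1) r0)
          + chainSum d t2 := by
      conv_lhs => rw [← hsplit]
      have : r0 :: (t1 ++ t2) = (r0 :: t1) ++ t2 := rfl
      rw [this, chainSum_append d (by simp) ht2, chainSum_cons d r0 ht1,
        List.getLast_cons ht1, hlast1, hhead2, hhead1]
    rw [lhs, rhs, dropTerm, if_neg (by omega)]
    simp only [Nat.add_sub_cancel]
    ring

lemma sum_dropTerm (d : α → α → ℝ) (r0 : α) (c : List α) :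
    ∑ k ∈ Finset.range c.length, dropTerm d r0 c k = chainSum d (r0 :: c) := by
  rw [chainSum_eq_sum_getD d r0 (r0 :: c)]
  simp only [List.length_cons, Nat.add_sub_cancel]
  refine Finset.sum_congr rfl fun k _ => ?_
  cases k with
  | zero => simp [dropTerm]
  | succ j => simp [dropTerm]

lemma exists_good_path (d : α → α → ℝ) (r0 : α) (c : List α) (hc : c ≠ [])
    (hlast : c.getLast hc = r0) :
    ∃ P : List α, P.Perm c ∧
      chainSum d P ≤ (1 - 1 / (c.length : ℝ)) * chainSum d (r0 :: c) := by
  have hnpos : 0 < c.length := List.length_pos_iff.2 hc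
  obtain ⟨k, hk, hmax⟩ := Finset.exists_max_image (Finset.range c.length)
    (dropTerm d r0 c) ⟨0, Finset.mem_range.2 hnpos⟩
  obtain ⟨P, hP, hPsum⟩ := exists_rotation d r0 c hc hlast (Finset.mem_range.1 hk)
  refine ⟨P, hP, ?_⟩
  set S := chainSum d (r0 :: c) with hS
  have hsum : S ≤ (c.length : ℝ) * dropTerm d r0 c k := by
    have := Finset.sum_le_card_nsmul (Finset.range c.length) (dropTerm d r0 c)
      (dropTerm d r0 c k) (fun j hj => hmax j hj)
    rw [sum_dropTerm, Finset.card_range] at this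
    simpa [nsmul_eq_mul] using this
  have hnR : (0 : ℝ) < c.length := by exact_mod_cast hnpos
  have hdiv : S / c.length ≤ dropTerm d r0 c k := by
    rw [div_le_iff₀ hnR]
    linarith
  rw [hPsum]
  have heq : (1 - 1 / (c.length : ℝ)) * S = S - S / c.length := by
    field_simp
  rw [heq]
  linarith

-- getLast? helpers
lemma getLast?_cons_of_ne_nil (a : α) {l : List α} (h : l ≠ []) :
    (a :: l).getLast? = l.getLast? := by
  cases l with
  | nil => exact absurd rfl h
  | cons b t => rw [List.getLast?_cons_cons]

lemma getLast?_dedup [DecidableEq α] (l : List α) : l.dedup.getLast? = l.getLast? := by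
  induction l with
  | nil => rfl
  | cons a t ih =>
    by_cases h : a ∈ t
    · rw [List.dedup_cons_of_mem h, ih, getLast?_cons_of_ne_nil a (ne_nil_of_mem h)]
    · rw [List.dedup_cons_of_notMem h]
      cases t with
      | nil => simp
      | cons b t' =>
        have hne : (b :: t').dedup ≠ [] :=
          ne_nil_of_mem (List.mem_dedup.2 (List.mem_cons_self (a := b) (l := t')))
        rw [getLast?_cons_of_ne_nil a hne, ih,
          getLast?_cons_of_ne_nil a (List.cons_ne_nil b t')]

/-- From a closed list `r0 :: t` (ending at `r0`) covering `R`, extract a clean cycle list. -/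
lemma extract_cycle [DecidableEq α] (R : Finset α) (r0 : α) (hr0 : r0 ∈ R)
    (t : List α) (ht : t ≠ []) (hlast : t.getLast ht = r0)
    (hcover : ∀ x ∈ R, x ∈ r0 :: t) :
    ∃ (c : List α) (hc : c ≠ []), c.Nodup ∧ c.toFinset = R ∧ c.getLast hc = r0 ∧
      ∀ (d : α → α → ℝ), (∀ a b c', d a c' ≤ d a b + d b c') →
        chainSum d (r0 :: c) ≤ chainSum d (r0 :: t) := by
  classical
  set c := (t.filter (fun x => x ∈ R)).dedup with hcdef
  have hr0t : r0 ∈ t := hlast ▸ List.getLast_mem ht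
  have hfilne : t.filter (fun x => x ∈ R) ≠ [] := by
    apply ne_nil_of_mem (a := r0)
    rw [List.mem_filter]
    exact ⟨hr0t, by simp [hr0]⟩
  have hcne : c ≠ [] := by
    apply ne_nil_of_mem (a := r0)
    rw [hcdef, List.mem_dedup, List.mem_filter]
    exact ⟨hr0t, by simp [hr0]⟩
  have hnodup : c.Nodup := List.nodup_dedup _
  have htf : c.toFinset = R := by
    ext x
    rw [List.mem_toFinset, hcdef, List.mem_dedup, List.mem_filter]
    constructor
    · rintro ⟨-, hx⟩
      simpa using hx
    · intro hx
      refine ⟨?_, by simpa using hx⟩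
      rcases List.mem_cons.1 (hcover x hx) with h | h
      · exact h ▸ hr0t
      · exact h
  have hclast? : c.getLast? = some r0 := by
    rw [hcdef, getLast?_dedup]
    have hfil : (t.filter (fun x => x ∈ R)).getLast hfilne = t.getLast ht := by
      apply List.getLast_filter_of_pos
      rw [hlast]
      simp [hr0]
    rw [List.getLast?_eq_getLast hfilne, hfil, hlast]
  have hclast : c.getLast hcne = r0 := by
    rw [List.getLast?_eq_getLast hcne, Option.some_inj] at hclast?
    exact hclast?
  refine ⟨c, hcne, hnodup, htf, hclast, ?_⟩
  intro d htri
  have hsub : c <+ t := (List.dedup_sublist _).trans (List.filter_sublist (l := t))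
  have hc' : c.dropLast ++ [r0] = c := by
    conv_rhs => rw [← List.dropLast_append_getLast hcne]
    rw [hclast]
  have ht' : t.dropLast ++ [r0] = t := by
    conv_rhs => rw [← List.dropLast_append_getLast ht]
    rw [hlast]
  have hsub' : c.dropLast <+ t.dropLast := by
    rw [← hc', ← ht'] at hsub
    exact (List.append_sublist_append_right _).1 hsub
  have h1 : chainSum d (r0 :: c) = anchor d r0 c.dropLast r0 := by
    rw [anchor_eq_chainSum, hc']
  have h2 : chainSum d (r0 :: t) = anchor d r0 t.dropLast r0 := by
    rw [anchor_eq_chainSum, ht']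
  rw [h1, h2]
  exact anchor_mono htri hsub' r0 r0


end lists

section tour
variable {W : Type*}


lemma support_mapLe {G G' : SimpleGraph W} (h : G ≤ G') {u v : W} (p : G.Walk u v) :
    (p.mapLe h).support = p.support := by
  have hid : ⇑(Hom.ofLE h) = id := rfl
  simp [Walk.support_map, hid]

lemma edges_mapLe {G G' : SimpleGraph W} (h : G ≤ G') {u v : W} (p : G.Walk u v) :
    (p.mapLe h).edges = p.edges := by
  have hid : ⇑(Hom.ofLE h) = id := rfl
  simp [Walk.edges_map, hid, Sym2.map_id]

/-- Splitting reachability along a possibly-deleted edge. -/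
lemma reach_decomp (H : SimpleGraph W) (a b : W) {x v : W} (p : H.Walk x v) :
    (H.deleteEdges {s(a, b)}).Reachable x v ∨
      ((H.deleteEdges {s(a, b)}).Reachable x a ∧ (H.deleteEdges {s(a, b)}).Reachable b v) ∨
      ((H.deleteEdges {s(a, b)}).Reachable x b ∧ (H.deleteEdges {s(a, b)}).Reachable a v) := by
  induction p with
  | nil => exact Or.inl (Reachable.refl _)
  | @cons x c v h q ih =>
    by_cases hxc : s(x, c) = s(a, b)
    · rw [Sym2.eq_iff] at hxc
      rcases hxc with ⟨rfl, rfl⟩ | ⟨rfl, rfl⟩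
      · rcases ih with h1 | ⟨h1, h2⟩ | ⟨h1, h2⟩
        · exact Or.inr (Or.inl ⟨Reachable.refl _, h1⟩)
        · exact Or.inl (h1.symm.trans h2)
        · exact Or.inl h2
      · rcases ih with h1 | ⟨h1, h2⟩ | ⟨h1, h2⟩
        · exact Or.inr (Or.inr ⟨Reachable.refl _, h1⟩)
        · exact Or.inl h2
        · exact Or.inl (h1.symm.trans h2)
    · have h' : (H.deleteEdges {s(a, b)}).Adj x c :=
        SimpleGraph.deleteEdges_adj.2 ⟨h, by simpa using hxc⟩
      have hr : (H.deleteEdges {s(a, b)}).Reachable x c := h'.reachable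
      rcases ih with h1 | ⟨h1, h2⟩ | ⟨h1, h2⟩
      · exact Or.inl (hr.trans h1)
      · exact Or.inr (Or.inl ⟨hr.trans h1, h2⟩)
      · exact Or.inr (Or.inr ⟨hr.trans h1, h2⟩)

lemma tour_glue [DecidableEq W] [DecidableEq (Sym2 W)] (H : SimpleGraph W)
    (hac : H.IsAcyclic) {e0 : Sym2 W} (a b r : W) (hab : H.Adj a b) (heq : s(a, b) = e0)
    (p1 : (H.deleteEdges {e0}).Walk r r) (p2 : (H.deleteEdges {e0}).Walk b b)
    (h1 : ∀ v, (H.deleteEdges {e0}).Reachable r v → v ∈ p1.support)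
    (h2 : ∀ v, (H.deleteEdges {e0}).Reachable b v → v ∈ p2.support)
    (hc1 : ∀ e, p1.edges.count e ≤ 2) (hc2 : ∀ e, p2.edges.count e ≤ 2)
    (hra : (H.deleteEdges {e0}).Reachable r a) :
    ∃ p : H.Walk r r, (∀ v, H.Reachable r v → v ∈ p.support) ∧ ∀ e, p.edges.count e ≤ 2 := by
  have hle : H.deleteEdges {e0} ≤ H := SimpleGraph.deleteEdges_le _
  have hnot : e0 ∉ (H.deleteEdges {e0}).edgeSet := by
    rw [edgeSet_deleteEdges]; simp
  -- r cannot also reach b in H', else we'd get a cycle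
  have hrb : ¬ (H.deleteEdges {e0}).Reachable r b := by
    intro hrb
    obtain ⟨q⟩ := hra.symm.trans hrb
    let P : H.Path a b := ⟨(q.toPath : (H.deleteEdges {e0}).Walk a b).mapLe hle, (q.toPath.2).mapLe hle⟩
    have hecyc : ¬s(b, a) ∈ (P : H.Walk a b).edges := by
      intro hmem
      have : s(b, a) ∈ (H.deleteEdges {e0}).edgeSet := by
        apply Walk.edges_subset_edgeSet _
        rw [show (P : H.Walk a b).edges = (q.toPath : (H.deleteEdges {e0}).Walk a b).edges from
          edges_mapLe hle _] at hmem
        exact hmem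
      rw [Sym2.eq_swap, heq] at this
      exact hnot this
    exact hac _ (SimpleGraph.Path.cons_isCycle P hab.symm hecyc)
  -- walks in different components have disjoint edges
  have reach1 : ∀ v, v ∈ p1.support → (H.deleteEdges {e0}).Reachable r v := fun v hv => ⟨p1.takeUntil v hv⟩
  have reach2 : ∀ v, v ∈ p2.support → (H.deleteEdges {e0}).Reachable b v := fun v hv => ⟨p2.takeUntil v hv⟩
  have disj : ∀ e, e ∈ p1.edges → e ∈ p2.edges → False := by
    intro e
    induction e using Sym2.ind with
    | _ x y =>
      intro he1 he2
      have hx1 := Walk.fst_mem_support_of_mem_edges p1 he1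
      have hx2 := Walk.fst_mem_support_of_mem_edges p2 he2
      exact hrb ((reach1 x hx1).trans (reach2 x hx2).symm)
  -- assemble the walk
  have ha1 : a ∈ p1.support := h1 a hra
  let q1 := p1.takeUntil a ha1
  let q2 := p1.dropUntil a ha1
  let pw : H.Walk r r := (q1.mapLe hle).append
    (Walk.cons hab ((p2.mapLe hle).append (Walk.cons hab.symm (q2.mapLe hle))))
  have hsupp1 : ∀ v, v ∈ p1.support → v ∈ q1.support ∨ v ∈ q2.support := by
    intro v hv
    rw [← p1.take_spec ha1, Walk.mem_support_append_iff] at hv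
    exact hv
  have hpwsupp : ∀ v, v ∈ q1.support ∨ v ∈ q2.support ∨ v ∈ p2.support → v ∈ pw.support := by
    intro v hv
    simp only [pw, Walk.mem_support_append_iff, Walk.support_cons, List.mem_cons,
      support_mapLe] at *
    tauto
  have hedges1 : q1.edges ++ q2.edges = p1.edges := by
    rw [← Walk.edges_append, p1.take_spec ha1]
  have hpwedges : pw.edges = q1.edges ++ (s(a, b) :: (p2.edges ++ (s(b, a) :: q2.edges))) := by
    simp only [pw, Walk.edges_append, Walk.edges_cons, edges_mapLe]
  refine ⟨pw, ?_, ?_⟩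
  · intro v hv
    obtain ⟨p⟩ := hv
    have decomp := reach_decomp H a b p
    rw [heq] at decomp
    rcases decomp with hd | ⟨hd1, hd2⟩ | ⟨hd1, hd2⟩
    · exact hpwsupp v (by
        rcases hsupp1 v (h1 v hd) with h | h
        · exact Or.inl h
        · exact Or.inr (Or.inl h))
    · exact hpwsupp v (Or.inr (Or.inr (h2 v hd2)))
    · exact absurd hd1 hrb
  · intro e
    have hs1 : s(a, b) = e0 := heq
    have hs2 : s(b, a) = e0 := by rw [Sym2.eq_swap]; exact heq
    have hcp1 : q1.edges.count e + q2.edges.count e = p1.edges.count e := by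
      rw [← hedges1, List.count_append]
    rw [hpwedges]
    by_cases he0 : e = e0
    · subst he0
      have hz1 : q1.edges.count e = 0 :=
        List.count_eq_zero_of_not_mem fun hm => hnot (Walk.edges_subset_edgeSet q1 hm)
      have hz2 : q2.edges.count e = 0 :=
        List.count_eq_zero_of_not_mem fun hm => hnot (Walk.edges_subset_edgeSet q2 hm)
      have hz3 : p2.edges.count e = 0 :=
        List.count_eq_zero_of_not_mem fun hm => hnot (Walk.edges_subset_edgeSet p2 hm)
      simp [List.count_append, List.count_cons, hz1, hz2, hz3, hs1, hs2]
    · have hne1 : e ≠ s(a, b) := fun h => he0 (h.trans hs1)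
      have hne2 : e ≠ s(b, a) := fun h => he0 (h.trans hs2)
      have hstep : (q1.edges ++ (s(a, b) :: (p2.edges ++ s(b, a) :: q2.edges))).count e =
          q1.edges.count e + q2.edges.count e + p2.edges.count e := by
        simp [List.count_append, List.count_cons, hne1, hne2, Ne.symm hne1, Ne.symm hne2]
        omega
      rw [hstep]
      by_cases hm1 : e ∈ p1.edges
      · have hz : p2.edges.count e = 0 :=
          List.count_eq_zero_of_not_mem (fun hm2 => disj e hm1 hm2)
        have := hc1 e
        omega
      · have h0 : p1.edges.count e = 0 := List.count_eq_zero_of_not_mem hm1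
        have := hc2 e
        omega

lemma tour_aux : ∀ (k : ℕ) {W : Type*} [Fintype W] [DecidableEq W] [DecidableEq (Sym2 W)]
    (H : SimpleGraph W), H.IsAcyclic → H.edgeSet.ncard = k → ∀ (r : W),
    ∃ p : H.Walk r r, (∀ v, H.Reachable r v → v ∈ p.support) ∧ ∀ e, p.edges.count e ≤ 2 := by
  intro k
  induction k with
  | zero =>
    intro W _ _ _ H hac hk r
    have hempty : H.edgeSet = ∅ := (Set.ncard_eq_zero (Set.toFinite _)).1 hk
    refine ⟨Walk.nil, ?_, by simp⟩
    intro v hv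
    obtain ⟨p⟩ := hv
    cases p with
    | nil => simp
    | cons h q =>
      exact absurd ((SimpleGraph.mem_edgeSet H).2 h) (by rw [hempty]; simp)
  | succ k ih =>
    intro W _ _ _ H hac hk r
    have hfin : H.edgeSet.Finite := Set.toFinite _
    have hne : H.edgeSet.Nonempty := Set.nonempty_of_ncard_ne_zero (by omega)
    obtain ⟨e, he⟩ := hne
    revert he
    induction e using Sym2.ind with
    | _ a b =>
      intro he
      have hab : H.Adj a b := (SimpleGraph.mem_edgeSet H).1 he
      have hle : H.deleteEdges {s(a, b)} ≤ H := SimpleGraph.deleteEdges_le _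
      have hac' : (H.deleteEdges {s(a, b)}).IsAcyclic :=
        fun v c hc => hac (c.mapLe hle) (hc.mapLe hle)
      have hk' : (H.deleteEdges {s(a, b)}).edgeSet.ncard = k := by
        rw [edgeSet_deleteEdges, Set.ncard_diff_singleton_of_mem he, hk]
        omega
      by_cases hra : (H.deleteEdges {s(a, b)}).Reachable r a
      · obtain ⟨p1, h1, hc1⟩ := ih (H.deleteEdges {s(a, b)}) hac' hk' r
        obtain ⟨p2, h2, hc2⟩ := ih (H.deleteEdges {s(a, b)}) hac' hk' b
        exact tour_glue H hac a b r hab rfl p1 p2 h1 h2 hc1 hc2 hra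
      · by_cases hrb : (H.deleteEdges {s(a, b)}).Reachable r b
        · obtain ⟨p1, h1, hc1⟩ := ih (H.deleteEdges {s(a, b)}) hac' hk' r
          obtain ⟨p2, h2, hc2⟩ := ih (H.deleteEdges {s(a, b)}) hac' hk' a
          exact tour_glue H hac b a r hab.symm (Sym2.eq_swap) p1 p2 h1 h2 hc1 hc2 hrb
        -- edge is outside the component of r
        · obtain ⟨p1, h1, hc1⟩ := ih (H.deleteEdges {s(a, b)}) hac' hk' r
          refine ⟨p1.mapLe hle, ?_, ?_⟩
          · intro v hv
            obtain ⟨p⟩ := hv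
            rcases reach_decomp H a b p with hd | ⟨hd1, _⟩ | ⟨hd1, _⟩
            · rw [support_mapLe]; exact h1 v hd
            · exact absurd hd1 hra
            · exact absurd hd1 hrb
          · intro e
            rw [edges_mapLe]
            exact hc1 e

end tour

-- ### path graph facts

lemma pathGraph_isAcyclic (n : ℕ) : (SimpleGraph.pathGraph n).IsAcyclic := by
  rw [isAcyclic_iff_forall_adj_isBridge]
  suffices key : ∀ u v : Fin n, u.val + 1 = v.val → (pathGraph n).IsBridge s(u, v) by
    intro u v hadj
    rcases (pathGraph_adj.1 hadj) with h | h
    · exact key u v h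
    · rw [Sym2.eq_swap]; exact key v u h
  intro u v huv
  have hadj' : (pathGraph n).Adj u v := pathGraph_adj.2 (Or.inl huv)
  rw [isBridge_iff]
  rintro ⟨p⟩
  have inv : ∀ (x y : Fin n) (q : ((pathGraph n) \ fromEdgeSet {s(u, v)}).Walk x y),
      x.val ≤ u.val → y.val ≤ u.val := by
    intro x y q
    induction q with
    | nil => exact fun h => h
    | @cons x c y h q ih =>
      intro hx
      apply ih
      rw [sdiff_adj, fromEdgeSet_adj] at h
      obtain ⟨hadj, hne⟩ := h
      rcases pathGraph_adj.1 hadj with h1 | h1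
      · -- x + 1 = c
        by_contra hc
        push_neg at hc
        have hxu : x = u := by
          apply Fin.ext
          omega
        have hcv : c = v := by
          apply Fin.ext
          omega
        exact hne ⟨by rw [hxu, hcv]; exact rfl, Fin.ne_of_val_ne (by omega)⟩
      · -- c + 1 = x
        omega
  have := inv u v p le_rfl
  omega

lemma pathGraph_edgeSet (m : ℕ) :
    (SimpleGraph.pathGraph (m + 1)).edgeSet =
      Set.range (fun i : Fin m => s(Fin.castSucc i, Fin.succ i)) := by
  ext e
  induction e using Sym2.ind with
  | _ a b =>
    simp only [mem_edgeSet, Set.mem_range]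
    constructor
    · intro hadj
      rcases pathGraph_adj.1 hadj with h | h
      · refine ⟨⟨a.val, by omega⟩, ?_⟩
        have ha : Fin.castSucc ⟨a.val, by omega⟩ = a := by
          apply Fin.ext; simp
        have hb : Fin.succ (⟨a.val, by omega⟩ : Fin m) = b := by
          apply Fin.ext; simp [h]
        rw [ha, hb]
      · refine ⟨⟨b.val, by omega⟩, ?_⟩
        have ha : Fin.castSucc ⟨b.val, by omega⟩ = b := by
          apply Fin.ext; simp
        have hb : Fin.succ (⟨b.val, by omega⟩ : Fin m) = a := by
          apply Fin.ext; simp [h]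
        rw [ha, hb, Sym2.eq_swap]
    · rintro ⟨i, h⟩
      have hadj : (SimpleGraph.pathGraph (m + 1)).Adj i.castSucc i.succ :=
        pathGraph_adj.2 (Or.inl (by simp))
      have h2 := (SimpleGraph.mem_edgeSet _).2 hadj
      rw [h] at h2
      exact (SimpleGraph.mem_edgeSet _).1 h2

lemma psi_injective (m : ℕ) :
    Function.Injective (fun i : Fin m => s(Fin.castSucc i, Fin.succ i)) := by
  intro i j hij
  simp only [Sym2.eq_iff] at hij
  rcases hij with ⟨h1, -⟩ | ⟨h1, h2⟩
  · exact Fin.castSucc_injective m h1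
  · have := congrArg Fin.val h1
    have := congrArg Fin.val h2
    simp at *
    omega

lemma edgeSet_map' {V W : Type*} (f : V ↪ W) (G : SimpleGraph V) :
    (G.map f).edgeSet = Sym2.map ⇑f '' G.edgeSet := by
  ext e
  induction e using Sym2.ind with
  | _ x y =>
    constructor
    · intro he
      obtain ⟨u, v, h, hu, hv⟩ :=
        (SimpleGraph.map_adj f G x y).1 ((SimpleGraph.mem_edgeSet _).1 he)
      exact ⟨s(u, v), (SimpleGraph.mem_edgeSet _).2 h, by rw [Sym2.map_pair_eq, hu, hv]⟩
    · rintro ⟨e', he', heq⟩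
      rw [← heq]
      revert he'
      induction e' using Sym2.ind with
      | _ u v =>
        intro he'
        rw [Sym2.map_pair_eq]
        exact (SimpleGraph.mem_edgeSet _).2 ((SimpleGraph.map_adj f G _ _).2
          ⟨u, v, (SimpleGraph.mem_edgeSet _).1 he', rfl, rfl⟩)

/-- Build a spanning tree of `R` as a path along the list `P`, with cost at most
the chain sum of shortest-path distances along `P`. -/
lemma exists_tree_cost {V : Type*} [Fintype V] [DecidableEq V] (G : SimpleGraph V)
    (w : Sym2 V → ℝ) (hw : ∀ e, 0 ≤ w e) (R : Finset V) (m : ℕ) (P : List V)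
    (hnd : P.Nodup) (htf : P.toFinset = R) (hlen : P.length = m + 1) :
    ∃ T : SimpleGraph {x // x ∈ R}, T.IsTree ∧
      (∑ᶠ e ∈ T.edgeSet, spDistSym G w (e.map Subtype.val)) ≤ chainSum (spDist G w) P := by
  have hx0 : P ≠ [] := by intro h; rw [h] at hlen; simp at hlen
  set x0 : V := P.head hx0 with hx0def
  have hget : ∀ i : Fin (m + 1), P.get (Fin.cast hlen.symm i) ∈ R := by
    intro i
    rw [← htf]
    exact List.mem_toFinset.2 (List.get_mem P ⟨i.val, by omega⟩)
  set f : Fin (m + 1) → {x // x ∈ R} := fun i => ⟨P.get (Fin.cast hlen.symm i), hget i⟩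
    with hfdef
  have hinj : Function.Injective f := by
    intro i j hij
    have := congrArg Subtype.val hij
    have h2 := (List.nodup_iff_injective_get.1 hnd) this
    have := congrArg Fin.val h2
    simp at this
    exact Fin.ext this
  have hbij : Function.Bijective f := by
    rw [Fintype.bijective_iff_injective_and_card]
    refine ⟨hinj, ?_⟩
    rw [Fintype.card_fin, Fintype.card_coe, ← htf, List.toFinset_card_of_nodup hnd, hlen]
  set eqv : Fin (m + 1) ≃ {x // x ∈ R} := Equiv.ofBijective f hbij with heqv
  set T : SimpleGraph {x // x ∈ R} := (SimpleGraph.pathGraph (m + 1)).map eqv.toEmbedding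
    with hTdef
  have hTconn : T.Connected := by
    apply SimpleGraph.Connected.map
      (f := ⟨⇑eqv.toEmbedding, ?_⟩) (?_) (pathGraph_connected m)
    · intro a b hab
      exact (SimpleGraph.map_adj _ _ _ _).2 ⟨a, b, hab, rfl, rfl⟩
    · exact eqv.surjective
  have hTac : T.IsAcyclic := by
    intro v c hc
    have hg : ∀ x y : {x // x ∈ R}, T.Adj x y →
        (SimpleGraph.pathGraph (m + 1)).Adj (eqv.symm x) (eqv.symm y) := by
      intro x y hxy
      obtain ⟨a, b, hab, ha, hb⟩ := (SimpleGraph.map_adj _ _ _ _).1 hxy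
      have ha' : eqv.symm x = a := by rw [← ha]; exact eqv.symm_apply_apply a
      have hb' : eqv.symm y = b := by rw [← hb]; exact eqv.symm_apply_apply b
      rw [ha', hb']
      exact hab
    exact pathGraph_isAcyclic (m + 1) (c.map ⟨⇑eqv.symm, fun h => hg _ _ h⟩)
      (hc.map eqv.symm.injective)
  refine ⟨T, ⟨hTconn, hTac⟩, ?_⟩
  have hedge : T.edgeSet = Sym2.map ⇑eqv.toEmbedding ''
      Set.range (fun i : Fin m => s(Fin.castSucc i, Fin.succ i)) := by
    rw [hTdef, edgeSet_map', pathGraph_edgeSet]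
  rw [hedge]
  rw [finsum_mem_image (Set.injOn_of_injective (Sym2.map.injective eqv.toEmbedding.injective))]
  rw [finsum_mem_range (psi_injective m)]
  rw [finsum_eq_sum_of_fintype]
  have hterm : ∀ i : Fin m,
      spDistSym G w ((Sym2.map (⇑eqv.toEmbedding) s(Fin.castSucc i, Fin.succ i)).map
        Subtype.val) ≤ spDist G w (P.getD i.val x0) (P.getD (i.val + 1) x0) := by
    intro i
    rw [Sym2.map_pair_eq, Sym2.map_pair_eq]
    have hv1 : (Subtype.val (eqv.toEmbedding (Fin.castSucc i))) = P.getD i.val x0 := by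
      show Subtype.val (f (Fin.castSucc i)) = _
      rw [hfdef]
      rw [List.getD_eq_getElem _ _ (n := i.val) (by omega)]
      rfl
    have hv2 : (Subtype.val (eqv.toEmbedding (Fin.succ i))) = P.getD (i.val + 1) x0 := by
      show Subtype.val (f (Fin.succ i)) = _
      rw [hfdef]
      rw [List.getD_eq_getElem _ _ (n := i.val + 1) (by omega)]
      rfl
    rw [hv1, hv2]
    exact spDistSym_le hw _ _
  calc ∑ i : Fin m, spDistSym G w ((Sym2.map (⇑eqv.toEmbedding)
          s(Fin.castSucc i, Fin.succ i)).map Subtype.val)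
      ≤ ∑ i : Fin m, spDist G w (P.getD i.val x0) (P.getD (i.val + 1) x0) :=
        Finset.sum_le_sum fun i _ => hterm i
    _ = ∑ k ∈ Finset.range m, spDist G w (P.getD k x0) (P.getD (k + 1) x0) :=
        Fin.sum_univ_eq_sum_range (fun k => spDist G w (P.getD k x0) (P.getD (k + 1) x0)) m
    _ = chainSum (spDist G w) P := by
        rw [chainSum_eq_sum_getD (spDist G w) x0 P, hlen]
        simp


section final
variable {V : Type*} {G : SimpleGraph V} {w : Sym2 V → ℝ}

lemma finsum_mem_nonneg {β : Type*} (s : Set β) (f : β → ℝ) (hf : ∀ a, 0 ≤ f a) :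
    0 ≤ ∑ᶠ a ∈ s, f a := by
  rw [finsum_mem_def]
  exact finsum_nonneg fun a => Set.indicator_nonneg (fun x _ => hf x) a

lemma listcost_le [Fintype V] [DecidableEq (Sym2 V)] (hw : ∀ e, 0 ≤ w e) (S : Set (Sym2 V)) (l : List (Sym2 V))
    (hcount : ∀ e, l.count e ≤ 2) (hmem : ∀ e ∈ l, e ∈ S) :
    (l.map w).sum ≤ 2 * ∑ᶠ e ∈ S, w e := by
  classical
  have hSfin : S.Finite := Set.toFinite _
  have h1 : ∑ᶠ e ∈ S, w e = ∑ e ∈ hSfin.toFinset, w e := by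
    conv_lhs => rw [← hSfin.coe_toFinset]
    rw [finsum_mem_coe_finset]
  have h2 : (l.map w).sum = ∑ e ∈ l.toFinset, (l.count e) • w e := by
    have := Finset.sum_multiset_map_count (l : Multiset (Sym2 V)) w
    simpa using this
  rw [h1, h2]
  calc ∑ e ∈ l.toFinset, (l.count e) • w e
      ≤ ∑ e ∈ l.toFinset, 2 * w e := by
        apply Finset.sum_le_sum
        intro e he
        rw [nsmul_eq_mul]
        exact mul_le_mul_of_nonneg_right (by exact_mod_cast hcount e) (hw e)
    _ ≤ ∑ e ∈ hSfin.toFinset, 2 * w e := by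
        apply Finset.sum_le_sum_of_subset_of_nonneg
        · intro e he
          exact hSfin.mem_toFinset.2 (hmem e (List.mem_toFinset.1 he))
        · intro e _ _
          exact mul_nonneg (by norm_num) (hw e)
    _ = 2 * ∑ e ∈ hSfin.toFinset, w e := by rw [Finset.mul_sum]

lemma chainSum_support_le (hw : ∀ e, 0 ≤ w e) {u v : V} (p : G.Walk u v) :
    chainSum (spDist G w) p.support ≤ walkCost w p := by
  induction p with
  | nil => simp [chainSum, walkCost]
  | @cons x y v h q ih =>
    obtain ⟨t, ht⟩ : ∃ t, q.support = y :: t := ⟨q.support.tail, q.support_eq_cons⟩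
    rw [Walk.support_cons, ht, chainSum_cons_cons, walkCost_cons, ← ht]
    exact add_le_add (spDist_le_weight hw h) ih

lemma support_getLast? {u v : V} (p : G.Walk u v) : p.support.getLast? = some v := by
  induction p with
  | nil => rfl
  | cons h q ih =>
    rw [Walk.support_cons, getLast?_cons_of_ne_nil _ q.support_ne_nil, ih]

end final

end KouAux

/-- Kou's guarantee: in a finite connected graph with nonnegative edge weights,
if all `n ≥ 2` terminals in `R` are leaves of a minimum Steiner tree for `R`,
then the minimum spanning tree of the metric closure on `R` costs at most
`(2 - 2/n)` times the minimum Steiner tree cost. -/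
theorem stmt10 {V : Type*} [Fintype V] (G : SimpleGraph V) (hG : G.Connected)
    (w : Sym2 V → ℝ) (hw : ∀ e, 0 ≤ w e)
    (R : Finset V) (n : ℕ) (hn : 2 ≤ n) (hR : R.card = n)
    (Topt : G.Subgraph) (hTv : ↑R ⊆ Topt.verts) (hTtree : Topt.coe.IsTree)
    (hTopt : (∑ᶠ e ∈ Topt.edgeSet, w e) = steinerCost G w ↑R)
    (hleaves : ∀ r ∈ R, (Topt.neighborSet r).ncard = 1) :
    mstClosureCost G w R ≤ (2 - 2 / (n : ℝ)) * steinerCost G w ↑R := by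
  classical
  set OPT := ∑ᶠ e ∈ Topt.edgeSet, w e with hOPT
  obtain ⟨m, rfl⟩ : ∃ m, n = m + 1 := ⟨n - 1, by omega⟩
  have hR0 : R.Nonempty := by rw [← Finset.card_pos, hR]; omega
  obtain ⟨r0, hr0⟩ := hR0
  haveI : Fintype ↥Topt.verts := Fintype.ofFinite _
  obtain ⟨p, hcov, hcnt⟩ :=
    KouAux.tour_aux (Topt.coe.edgeSet.ncard) Topt.coe hTtree.2 rfl ⟨r0, hTv hr0⟩
  set q : G.Walk r0 r0 := p.map Topt.hom with hq
  have hhomcoe : ⇑Topt.hom = Subtype.val := rfl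
  have hedges : q.edges = p.edges.map (Sym2.map Subtype.val) := by
    rw [hq]; exact SimpleGraph.Walk.edges_map (f := Topt.hom) (p := p)
  have hsupp : q.support = p.support.map Subtype.val := by
    rw [hq]; exact SimpleGraph.Walk.support_map (f := Topt.hom) (p := p)
  have hmemE : ∀ e ∈ q.edges, e ∈ Topt.edgeSet := by
    intro e he
    rw [hedges] at he
    obtain ⟨e', he', rfl⟩ := List.mem_map.1 he
    have h1 : e' ∈ Topt.coe.edgeSet := SimpleGraph.Walk.edges_subset_edgeSet p he'
    revert h1
    induction e' using Sym2.ind with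
    | _ x y =>
      intro h1
      have h2 : Topt.Adj x y := ((SimpleGraph.mem_edgeSet _).1 h1)
      rw [Sym2.map_pair_eq]
      exact SimpleGraph.Subgraph.mem_edgeSet.2 h2
  have hcnt' : ∀ e, q.edges.count e ≤ 2 := by
    intro e
    by_cases he : e ∈ q.edges
    · rw [hedges] at he ⊢
      obtain ⟨e', he', rfl⟩ := List.mem_map.1 he
      rw [List.count_map_of_injective _ _ (Sym2.map.injective Subtype.val_injective)]
      exact hcnt e'
    · simp [List.count_eq_zero_of_not_mem he]
  have hqcost : walkCost w q ≤ 2 * OPT :=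
    KouAux.listcost_le hw Topt.edgeSet q.edges hcnt' hmemE
  have hRsupp : ∀ x ∈ R, x ∈ q.support := by
    intro x hx
    rw [hsupp]
    have hmem : (⟨x, hTv hx⟩ : ↥Topt.verts) ∈ p.support :=
      hcov _ (hTtree.1.preconnected _ _)
    exact List.mem_map.2 ⟨_, hmem, rfl⟩
  have hqhead : q.support = r0 :: q.support.tail := q.support_eq_cons
  have htne : q.support.tail ≠ [] := by
    intro h
    have hall : ∀ x ∈ R, x = r0 := by
      intro x hx
      have := hRsupp x hx
      rw [hqhead, h] at this
      simpa using this
    have hsub : R ⊆ {r0} := fun x hx => Finset.mem_singleton.2 (hall x hx)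
    have := Finset.card_le_card hsub
    rw [hR] at this
    simp at this
    omega
  have hlastq : q.support.tail.getLast htne = r0 := by
    have h1 : q.support.getLast? = some r0 := KouAux.support_getLast? q
    rw [hqhead, KouAux.getLast?_cons_of_ne_nil _ htne,
      List.getLast?_eq_getLast htne, Option.some_inj] at h1
    exact h1
  have hcover : ∀ x ∈ R, x ∈ r0 :: q.support.tail := by
    intro x hx
    have := hRsupp x hx
    rwa [hqhead] at this
  obtain ⟨c, hcne, hcnodup, hctf, hclast, hchain⟩ :=
    KouAux.extract_cycle R r0 hr0 q.support.tail htne hlastq hcover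
  have htri : ∀ a b c' : V, spDist G w a c' ≤ spDist G w a b + spDist G w b c' :=
    fun a b c' => KouAux.spDist_triangle hw hG.preconnected a b c'
  have hbound1 : KouAux.chainSum (spDist G w) (r0 :: c) ≤
      KouAux.chainSum (spDist G w) (r0 :: q.support.tail) := hchain _ htri
  have hbound2 : KouAux.chainSum (spDist G w) (r0 :: q.support.tail) ≤ walkCost w q := by
    have := KouAux.chainSum_support_le hw q
    rwa [hqhead] at this
  have hclen : c.length = m + 1 := by
    rw [← List.toFinset_card_of_nodup hcnodup, hctf, hR]
  obtain ⟨P, hPperm, hPle⟩ := KouAux.exists_good_path (spDist G w) r0 c hcne hclast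
  have hPnodup : P.Nodup := (hPperm.nodup_iff).2 hcnodup
  have hPtf : P.toFinset = R := by
    rw [List.toFinset_eq_of_perm _ _ hPperm, hctf]
  have hPlen : P.length = m + 1 := by rw [hPperm.length_eq, hclen]
  obtain ⟨T, hT, hTcost⟩ := KouAux.exists_tree_cost G w hw R m P hPnodup hPtf hPlen
  have hmst : mstClosureCost G w R ≤ ∑ᶠ e ∈ T.edgeSet, spDistSym G w (e.map Subtype.val) := by
    apply csInf_le
    · refine ⟨0, ?_⟩
      rintro x ⟨T', hT', rfl⟩
      exact KouAux.finsum_mem_nonneg _ _ (fun e => KouAux.spDistSym_nonneg hw _)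
    · exact ⟨T, hT, rfl⟩
  have hcoef : (0:ℝ) ≤ 1 - 1 / ((m:ℝ) + 1) := by
    have h1 : (1:ℝ) ≤ (m:ℝ) + 1 := by
      have : (0:ℝ) ≤ (m:ℝ) := Nat.cast_nonneg m
      linarith
    have := div_le_one_of_le₀ h1 (by linarith)
    linarith
  have hchainLB : KouAux.chainSum (spDist G w) (r0 :: c) ≤ 2 * OPT :=
    le_trans hbound1 (le_trans hbound2 hqcost)
  have hcastlen : ((c.length : ℝ)) = (m:ℝ) + 1 := by
    rw [hclen]
    push_cast
    ring
  have hfinal : KouAux.chainSum (spDist G w) P ≤ (1 - 1 / ((m:ℝ) + 1)) * (2 * OPT) := by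
    calc KouAux.chainSum (spDist G w) P
        ≤ (1 - 1 / (c.length : ℝ)) * KouAux.chainSum (spDist G w) (r0 :: c) := hPle
      _ = (1 - 1 / ((m:ℝ) + 1)) * KouAux.chainSum (spDist G w) (r0 :: c) := by
          rw [hcastlen]
      _ ≤ (1 - 1 / ((m:ℝ) + 1)) * (2 * OPT) :=
          mul_le_mul_of_nonneg_left hchainLB hcoef
  have hcast2 : ((m + 1 : ℕ) : ℝ) = (m:ℝ) + 1 := by push_cast; ring
  rw [← hTopt, hcast2]
  calc mstClosureCost G w R
      ≤ ∑ᶠ e ∈ T.edgeSet, spDistSym G w (e.map Subtype.val) := hmst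
    _ ≤ KouAux.chainSum (spDist G w) P := hTcost
    _ ≤ (1 - 1 / ((m:ℝ) + 1)) * (2 * OPT) := hfinal
    _ = (2 - 2 / ((m:ℝ) + 1)) * OPT := by ring
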